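/- arXiv:1607.05788 — 4 statements merged into one kernel-verified Lean document; each statement's English description precedes it below -/
import Mathlib

section
/- Let T be the rooted k-uniform hypergraph with a non-roots (white vertices) arranged in a row with edges on every k consecutive white vertices, plus b-a+k-1 roots, where the i-th root (1 ≤ i ≤ b-a+k-2) is joined by an edge to the ⌊1 + (i-1)(a-k+2)/(b-a+k-2)⌋-th set of k-1 consecutive white vertices and the last root to the (a-k+2)-th such set; assume b ≥ a-k+3 and a ≥ k. Then for every nonempty subset S of the non-roots, the number of edges of T meeting S is at least |S|·b/a. -/
open Finset

/-- Vertices of the hypergraph `T`: `Sum.inl i` is the `i`-th white (non-root) vertex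
(0-indexed, `0 ≤ i < a`), `Sum.inr i` is the `i`-th root (0-indexed). -/
abbrev TVertex : Type := ℕ ⊕ ℕ

/-- The set of `len` consecutive white vertices starting at position `j`. -/
def whiteSeg (j len : ℕ) : Finset TVertex :=
  (Finset.range len).image (fun t => Sum.inl (j + t))

/-- The `i`-th red edge: `k` consecutive white vertices starting at `i`. -/
def redEdge (k i : ℕ) : Finset TVertex := whiteSeg i k

/-- Position (0-indexed) of the set of `k-1` consecutive white vertices to which the
`i`-th root is joined: `⌊i(a-k+2)/(b-a+k-2)⌋` (the 1-indexed formula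
`⌊1+(i-1)(a-k+2)/(b-a+k-2)⌋` of the paper), except that the last root is joined to the
last such set, at position `a-k+1` (the `(a-k+2)`-th set, 1-indexed). -/
def rootPos (k a b i : ℕ) : ℕ :=
  if i = b - a + k - 2 then a - k + 1 else (i * (a - k + 2)) / (b - a + k - 2)

/-- The `i`-th green edge: the `i`-th root together with its `k-1` consecutive white
vertices. -/
def greenEdge (k a b i : ℕ) : Finset TVertex :=
  insert (Sum.inr i) (whiteSeg (rootPos k a b i) (k - 1))

/-- The edge set of the rooted hypergraph `T`: the `a-k+1` red edges together with the
`b-a+k-1` green edges (one per root), `b` edges in total. -/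
def TEdges (k a b : ℕ) : Finset (Finset TVertex) :=
  ((Finset.range (a - k + 1)).image (redEdge k)) ∪
    ((Finset.range (b - a + k - 1)).image (greenEdge k a b))

/-- The set of white (non-root) vertices of `T`. -/
def whites (a : ℕ) : Finset TVertex := (Finset.range a).image Sum.inl


/-! The white part of every edge is a window of `k` or `k - 1` consecutive positions. If some
window of `k - 1` positions inside `[min S, max S]` misses `S`, no edge meets both sides, so `ε`
is additive over the two parts and both are balanced by induction. Otherwise an edge meets `S`
exactly when it meets the interval `[min S, max S]`, and for an interval `[x, y]` everything is
explicit: with `c = a - k + 2` and `M = b - a + k - 2`, the roots `i < M` joined to a position in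
`[P, Q)` are exactly those with `⌈PM/c⌉ ≤ i < ⌈QM/c⌉`. -/

def windowHits {ι : Type*} (I : Finset ι) (f : ι → ℕ) (w : ℕ) (S : Finset ℕ) : ℕ :=
  #{i ∈ I | (S ∩ Ico (f i) (f i + w)).Nonempty}

def MeetsEveryWindow (g x y : ℕ) (S : Finset ℕ) : Prop :=
  ∀ j, x ≤ j → j + g ≤ y + 1 → (S ∩ Ico j (j + g)).Nonempty

theorem induction_on_missed_window {g : ℕ} (hg : 0 < g) {p : Finset ℕ → Prop} (empty : p ∅)
    (dense : ∀ S x y, x ∈ S → y ∈ S → S ⊆ Icc x y → MeetsEveryWindow g x y S → p S)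
    (union : ∀ S T, (∀ u ∈ S, ∀ v ∈ T, u + g < v) → p S → p T → p (S ∪ T))
    (S : Finset ℕ) : p S := by
  induction S using Finset.strongInduction with
  | H S ih =>
    rcases S.eq_empty_or_nonempty with rfl | hne
    · exact empty
    have hxS := S.min'_mem hne
    have hyS := S.max'_mem hne
    by_cases hdense : MeetsEveryWindow g (S.min' hne) (S.max' hne) S
    · exact dense S _ _ hxS hyS (fun v hv => mem_Icc.2 ⟨S.min'_le v hv, S.le_max' v hv⟩) hdense
    simp only [MeetsEveryWindow, not_forall, not_nonempty_iff_eq_empty] at hdense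
    obtain ⟨j, hxj, hjy, hmiss⟩ := hdense
    have hsplit : ∀ v ∈ S, ¬ v < j → j + g ≤ v := fun v hv hvj => by
      by_contra! h
      exact eq_empty_iff_forall_notMem.1 hmiss v (mem_inter.2 ⟨hv, mem_Ico.2 ⟨by omega, h⟩⟩)
    have hmin_lt : S.min' hne < j := by
      by_contra h
      have := hsplit _ hxS h
      omega
    rw [← filter_union_filter_not_eq (· < j) S]
    refine union _ _ (fun u hu v hv => ?_) (ih _ ?_) (ih _ ?_)
    · have := (mem_filter.1 hu).2
      have := hsplit v (mem_filter.1 hv).1 (mem_filter.1 hv).2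
      omega
    · exact filter_ssubset.2 ⟨_, hyS, by omega⟩
    · exact filter_ssubset.2 ⟨_, hxS, not_not.2 hmin_lt⟩

section windowHits

variable {ι : Type*} (I : Finset ι) (f : ι → ℕ) {w : ℕ}

lemma windowHits_union [DecidableEq ι] {S T : Finset ℕ}
    (hST : ∀ u ∈ S, ∀ v ∈ T, u + w ≤ v) :
    windowHits I f w (S ∪ T) = windowHits I f w S + windowHits I f w T := by
  rw [windowHits, windowHits, windowHits, ← card_union_of_disjoint, ← filter_or]
  · simp only [union_inter_distrib_right, union_nonempty]
  · refine disjoint_filter.2 fun i _ ⟨u, hu⟩ ⟨v, hv⟩ => ?_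
    simp only [mem_inter, mem_Ico] at hu hv
    have := hST u hu.1 v hv.1
    omega

lemma inter_Ico_nonempty_iff_of_meetsEveryWindow {S : Finset ℕ} {x y g j : ℕ} (hx : x ∈ S)
    (hy : y ∈ S) (hS : S ⊆ Icc x y) (hdense : MeetsEveryWindow g x y S) (hgw : g ≤ w) :
    (S ∩ Ico j (j + w)).Nonempty ↔ x < j + w ∧ j ≤ y := by
  constructor
  · rintro ⟨v, hv⟩
    have := mem_Icc.1 (hS (mem_inter.1 hv).1)
    have := mem_Ico.1 (mem_inter.1 hv).2
    omega
  · rintro ⟨hxj, hjy⟩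
    by_cases hjx : j ≤ x
    · exact ⟨x, mem_inter.2 ⟨hx, mem_Ico.2 ⟨hjx, hxj⟩⟩⟩
    by_cases hyj : y < j + w
    · exact ⟨y, mem_inter.2 ⟨hy, mem_Ico.2 ⟨hjy, hyj⟩⟩⟩
    exact (hdense j (by omega) (by omega)).mono
      (inter_subset_inter_left (Ico_subset_Ico_right (by omega)))

lemma windowHits_eq_of_meetsEveryWindow {S : Finset ℕ} {x y g : ℕ} (hx : x ∈ S) (hy : y ∈ S)
    (hS : S ⊆ Icc x y) (hdense : MeetsEveryWindow g x y S) (hgw : g ≤ w) :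
    windowHits I f w S = #{i ∈ I | x < f i + w ∧ f i ≤ y} :=
  congrArg card <| filter_congr fun _ _ =>
    inter_Ico_nonempty_iff_of_meetsEveryWindow hx hy hS hdense hgw

end windowHits

lemma card_filter_range_lt_add_le (n k x y : ℕ) :
    #{i ∈ range n | x < i + k ∧ i ≤ y} = min (y + 1) n - (x + 1 - k) := by
  rw [← Nat.card_Ico]
  congr 1
  ext i
  simp only [mem_filter, mem_range, mem_Ico]
  omega

lemma filter_range_div_eq_Ico {c : ℕ} (hc : 0 < c) (M P Q : ℕ) :
    {i ∈ range M | P ≤ i * c / M ∧ i * c / M < Q} =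
      Ico (P * M ⌈/⌉ c) (min Q c * M ⌈/⌉ c) := by
  ext i
  rcases M.eq_zero_or_pos with rfl | hM
  · simp
  have lt_ceilDiv : ∀ m, i < m ⌈/⌉ c ↔ c * i < m := fun m => by
    rw [← not_le, ceilDiv_le_iff_le_mul hc, not_le]
  simp only [mem_filter, mem_range, mem_Ico, Nat.le_div_iff_mul_le hM, Nat.div_lt_iff_lt_mul hM,
    ceilDiv_le_iff_le_mul hc, lt_ceilDiv, min_mul_of_nonneg _ _ (Nat.zero_le M), lt_min_iff,
    mul_comm c i, mul_comm c M, Nat.mul_lt_mul_right hc]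
  tauto

lemma mul_ceilDiv_lt {c : ℕ} (hc : 0 < c) (m : ℕ) : c * (m ⌈/⌉ c) < m + c := by
  rw [Nat.ceilDiv_eq_add_pred_div]
  have := Nat.mul_div_le (m + c - 1) c
  omega

lemma rootPos_of_lt {k a b i : ℕ} (hi : i < b - a + k - 2) :
    rootPos k a b i = i * (a - k + 2) / (b - a + k - 2) :=
  if_neg hi.ne

lemma rootPos_self (k a b : ℕ) : rootPos k a b (b - a + k - 2) = a - k + 1 :=
  if_pos rfl

lemma card_filter_rootPos {k a b x : ℕ} (hk : 2 ≤ k) (hxa : x < a) (y : ℕ) :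
    #{i ∈ range (b - a + k - 1) | x < rootPos k a b i + (k - 1) ∧ rootPos k a b i ≤ y} =
      min (y + 1) (a - k + 2) * (b - a + k - 2) ⌈/⌉ (a - k + 2) -
        (x + 2 - k) * (b - a + k - 2) ⌈/⌉ (a - k + 2) + if a - k + 1 ≤ y then 1 else 0 := by
  have hfirst :
      {i ∈ range (b - a + k - 2) | x < rootPos k a b i + (k - 1) ∧ rootPos k a b i ≤ y} =
        {i ∈ range (b - a + k - 2) | x + 2 - k ≤ i * (a - k + 2) / (b - a + k - 2) ∧
          i * (a - k + 2) / (b - a + k - 2) < y + 1} :=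
    filter_congr fun i hi => by
      rw [rootPos_of_lt (mem_range.1 hi)]
      generalize i * (a - k + 2) / (b - a + k - 2) = p
      omega
  rw [show b - a + k - 1 = (b - a + k - 2) + 1 by omega, range_add_one, filter_insert,
    rootPos_self, hfirst]
  have hlast : x < a - k + 1 + (k - 1) := by omega
  by_cases hy : a - k + 1 ≤ y
  · rw [if_pos ⟨hlast, hy⟩, if_pos hy, card_insert_of_notMem (by simp),
      filter_range_div_eq_Ico (by omega), Nat.card_Ico]
  · rw [if_neg (fun h => hy h.2), if_neg hy, filter_range_div_eq_Ico (by omega), Nat.card_Ico,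
      add_zero]

def edgeHits (k a b : ℕ) (S : Finset ℕ) : ℕ :=
  windowHits (range (a - k + 1)) id k S +
    windowHits (range (b - a + k - 1)) (rootPos k a b) (k - 1) S

lemma edgeHits_union {k a b : ℕ} {S T : Finset ℕ}
    (hST : ∀ u ∈ S, ∀ v ∈ T, u + k ≤ v) :
    edgeHits k a b (S ∪ T) = edgeHits k a b S + edgeHits k a b T := by
  rw [edgeHits, edgeHits, edgeHits, windowHits_union _ _ hST,
    windowHits_union _ _ fun u hu v hv => by have := hST u hu v hv; omega]
  ring

lemma edgeHits_eq_of_meetsEveryWindow {k a b : ℕ} (hk : 2 ≤ k) {S : Finset ℕ} {x y : ℕ}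
    (hx : x ∈ S) (hy : y ∈ S) (hS : S ⊆ Icc x y) (hya : y < a)
    (hdense : MeetsEveryWindow (k - 1) x y S) :
    edgeHits k a b S = min (y + 1) (a - k + 1) - (x + 1 - k) +
      (min (y + 1) (a - k + 2) * (b - a + k - 2) ⌈/⌉ (a - k + 2) -
        (x + 2 - k) * (b - a + k - 2) ⌈/⌉ (a - k + 2) + if a - k + 1 ≤ y then 1 else 0) := by
  have hxy := mem_Icc.1 (hS hx)
  rw [edgeHits, windowHits_eq_of_meetsEveryWindow _ _ hx hy hS hdense (Nat.sub_le k 1),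
    windowHits_eq_of_meetsEveryWindow _ _ hx hy hS hdense le_rfl]
  exact congrArg₂ _ (card_filter_range_lt_add_le _ _ _ _) (card_filter_rootPos hk (by omega) y)

/-- Unless `[x, y]` meets every edge, even `(a - k + 2) · ε ≥ (y + 1 - x) · b` holds. -/
lemma explicit_counts_balanced {k a M x y : ℕ} (hk : 2 ≤ k) (ha : k ≤ a) (hxy : x ≤ y)
    (hya : y < a) :
    (y + 1 - x) * (a - k + 2 + M) ≤
      a * (min (y + 1) (a - k + 1) - (x + 1 - k) +
        (min (y + 1) (a - k + 2) * M ⌈/⌉ (a - k + 2) - (x + 2 - k) * M ⌈/⌉ (a - k + 2) +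
          if a - k + 1 ≤ y then 1 else 0)) := by
  set c := a - k + 2 with hc_def
  have hc : 0 < c := by omega
  by_cases hall : x + 2 ≤ k ∧ a - k + 1 ≤ y
  · have hQ : min (y + 1) c * M ⌈/⌉ c = M := by
      rw [min_eq_right (by omega), ← smul_eq_mul, smul_ceilDiv hc]
    rw [if_pos hall.2, hQ, min_eq_right (by omega : a - k + 1 ≤ y + 1),
      show x + 2 - k = 0 by omega, show x + 1 - k = 0 by omega, zero_mul, zero_ceilDiv]
    calc (y + 1 - x) * (c + M) ≤ a * (c + M) := Nat.mul_le_mul_right _ (by omega)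
      _ = _ := by congr 1; omega
  refine le_trans ?_ (Nat.mul_le_mul_right _ (show c ≤ a by omega))
  have hCQ := (ceilDiv_le_iff_le_mul hc).1 (le_refl (min (y + 1) c * M ⌈/⌉ c))
  have hCP := mul_ceilDiv_lt hc ((x + 2 - k) * M)
  generalize min (y + 1) c * M ⌈/⌉ c = CQ at hCQ ⊢
  generalize (x + 2 - k) * M ⌈/⌉ c = CP at hCP ⊢
  have hGc := Nat.mul_le_mul_left c (le_tsub_add : CQ ≤ CQ - CP + CP)
  by_cases hright : a - k + 1 ≤ y
  · rw [if_pos hright, min_eq_right (by omega : a - k + 1 ≤ y + 1),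
      show a - k + 1 - (x + 1 - k) = a - x by omega]
    rw [min_eq_right (by omega : c ≤ y + 1)] at hCQ
    have hn := Nat.mul_le_mul_right (c + M) (show y + 1 - x ≤ a - x by omega)
    have hP : (x + 2 - k) * M + (a - x) * M = c * M := by rw [← add_mul]; congr 1; omega
    linarith
  rw [if_neg hright, min_eq_left (by omega : y + 1 ≤ a - k + 1)]
  rw [min_eq_left (by omega : y + 1 ≤ c)] at hCQ
  by_cases hleft : x + 2 ≤ k
  · rw [show x + 2 - k = 0 by omega, zero_mul, zero_add] at hCP
    have hCP0 : CP = 0 := by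
      by_contra h
      have := Nat.mul_le_mul_left c (Nat.one_le_iff_ne_zero.2 h)
      omega
    have hn := Nat.mul_le_mul_right (c + M) (show y + 1 - x ≤ y + 1 by omega)
    rw [hCP0, show x + 1 - k = 0 by omega, Nat.sub_zero, Nat.sub_zero, add_zero]
    linarith
  · have hP := Nat.mul_le_mul_right M (show x + 2 - k + (y + 1 - x) ≤ y + 1 by omega)
    have hk1 := Nat.mul_le_mul_left c (show 1 ≤ k - 1 by omega)
    rw [show y + 1 - (x + 1 - k) = (y + 1 - x) + (k - 1) by omega, add_zero]
    linarith

theorem card_mul_le_edgeHits {k a b : ℕ} (hk : 2 ≤ k) (ha : k ≤ a) (S : Finset ℕ)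
    (hS : S ⊆ range a) : #S * b ≤ a * edgeHits k a b S := by
  induction S using induction_on_missed_window (g := k - 1) (by omega) with
  | empty => simp
  | dense S x y hx hy hSxy hdense =>
    have hya := mem_range.1 (hS hy)
    have hcard : #S ≤ y + 1 - x := by simpa using card_le_card hSxy
    rw [edgeHits_eq_of_meetsEveryWindow hk hx hy hSxy hya hdense]
    -- `b ≤ (a - k + 2) + (b - a + k - 2)` is strict when the truncated `b - a` vanishes.
    calc #S * b ≤ (y + 1 - x) * (a - k + 2 + (b - a + k - 2)) :=
          Nat.mul_le_mul hcard (by omega)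
      _ ≤ _ := explicit_counts_balanced hk ha (mem_Icc.1 (hSxy hx)).2 hya
  | union S T hST ihS ihT =>
    have hdisj : Disjoint S T := disjoint_left.2 fun u hu hu' => by
      have := hST u hu u hu'
      omega
    rw [card_union_of_disjoint hdisj, edgeHits_union fun u hu v hv => by
      have := hST u hu v hv
      omega, add_mul, mul_add]
    exact Nat.add_le_add (ihS (subset_union_left.trans hS)) (ihT (subset_union_right.trans hS))

lemma toLeft_whiteSeg (j len : ℕ) : (whiteSeg j len).toLeft = Ico j (j + len) := by
  ext v
  simp only [mem_toLeft, whiteSeg, mem_image, mem_range, Sum.inl.injEq, mem_Ico]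
  constructor
  · rintro ⟨t, ht, rfl⟩
    omega
  · intro hv
    exact ⟨v - j, by omega, by omega⟩

lemma toRight_whiteSeg (j len : ℕ) : (whiteSeg j len).toRight = ∅ := by
  ext v
  simp [whiteSeg]

lemma inter_nonempty_iff_toLeft {α β : Type*} [DecidableEq α] [DecidableEq β]
    {u v : Finset (α ⊕ β)} (hv : v.toRight = ∅) :
    (u ∩ v).Nonempty ↔ (v.toLeft ∩ u.toLeft).Nonempty := by
  constructor
  · rintro ⟨a | b, hab⟩
    · exact ⟨a, by simpa [and_comm] using hab⟩
    · exact absurd (mem_toRight.2 (mem_inter.1 hab).2) (hv ▸ notMem_empty b)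
  · rintro ⟨a, ha⟩
    exact ⟨.inl a, by simpa [and_comm] using ha⟩

lemma redEdge_injective {k : ℕ} (hk : 0 < k) : Function.Injective (redEdge k) := by
  intro i j hij
  have h := congrArg toLeft hij
  simp only [redEdge, toLeft_whiteSeg, Finset.ext_iff, mem_Ico] at h
  have := (h i).1 (by omega)
  have := (h j).2 (by omega)
  omega

lemma toRight_greenEdge (k a b i : ℕ) : (greenEdge k a b i).toRight = {i} := by
  rw [greenEdge, toRight_insert_inr, toRight_whiteSeg, insert_empty_eq]

lemma greenEdge_injective (k a b : ℕ) : Function.Injective (greenEdge k a b) := fun i j h => by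
  simpa [toRight_greenEdge] using congrArg toRight h

lemma card_filter_TEdges {k : ℕ} (hk : 0 < k) (a b : ℕ) {S : Finset TVertex}
    (hS : S.toRight = ∅) :
    #{e ∈ TEdges k a b | (e ∩ S).Nonempty} = edgeHits k a b S.toLeft := by
  have hdisj : Disjoint ((range (a - k + 1)).image (redEdge k))
      ((range (b - a + k - 1)).image (greenEdge k a b)) := by
    simp only [disjoint_left, mem_image, not_exists, not_and]
    rintro _ ⟨i, -, rfl⟩ j - h
    simpa [redEdge, toRight_whiteSeg, toRight_greenEdge] using congrArg toRight h
  rw [TEdges, filter_union, card_union_of_disjoint (disjoint_filter_filter hdisj),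
    filter_image, filter_image, card_image_of_injective _ (redEdge_injective hk),
    card_image_of_injective _ (greenEdge_injective k a b), edgeHits, windowHits, windowHits]
  congr 2 <;> refine filter_congr fun i _ => ?_
  · rw [inter_nonempty_iff_toLeft hS, redEdge, toLeft_whiteSeg, id]
  · rw [inter_nonempty_iff_toLeft hS, greenEdge, toLeft_insert_inr, toLeft_whiteSeg]

theorem T_is_balanced_general (k a b : ℕ) (hk : 2 ≤ k) (ha : k ≤ a)
    (S : Finset TVertex) (hS : S ⊆ whites a) :
    S.card * b ≤ a * ((TEdges k a b).filter (fun e => (e ∩ S).Nonempty)).card := by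
  have hwhites : whites a = (range a).map .inl := by rw [map_eq_image]; rfl
  obtain ⟨hleft, hright⟩ := subset_map_inl.1 (hwhites ▸ hS)
  have hcard : #S = #S.toLeft := by
    rw [← card_toLeft_add_card_toRight, hright, card_empty, add_zero]
  rw [card_filter_TEdges (by omega) a b hright, hcard]
  exact card_mul_le_edgeHits hk ha _ hleft

/-- `T` is balanced: for every nonempty set `S` of non-roots, the number
`ε(S)` of edges of `T` meeting `S` satisfies `ε(S) ≥ |S|·b/a`, i.e.
`a·ε(S) ≥ |S|·b`.  (Here `2 ≤ k ≤ a` and `b ≥ a-k+3`.) -/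
theorem T_is_balanced (k a b : ℕ) (hk : 2 ≤ k) (ha : k ≤ a) (hb : a - k + 3 ≤ b)
    (S : Finset TVertex) (hS : S ⊆ whites a) (hSne : S.Nonempty) :
    S.card * b ≤ a * ((TEdges k a b).filter (fun e => (e ∩ S).Nonempty)).card :=
  T_is_balanced_general k a b hk ha S hS
end

section
/- Let T be a balanced rooted k-uniform hypergraph with root set R, a non-root vertices, and b edges each containing a non-root (so ε of the full non-root set is b). For every s ≥ 1, every hypergraph H obtained as a union of s copies of T agreeing on the roots R satisfies e(H) ≥ (|H| - |R|)·b/a. -/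
open Finset

/-- Let `T` be a balanced rooted `k`-uniform hypergraph with vertex set
`U`, root set `R ⊆ U`, `a = |U \ R|` non-roots, and `b` edges, each edge containing a
non-root.  ("Balanced" means: for every nonempty `S ⊆ U \ R`, the number of edges
meeting `S` is at least `|S|·b/a`.)  For every `s ≥ 1`, every hypergraph `H` obtained
as the union of `s` copies of `T` agreeing on the roots (each copy injective, with
non-roots allowed to coincide arbitrarily but not with root images) satisfies
`e(H) ≥ (|H| - |R|)·b/a`, i.e. `(|H| - |R|)·b ≤ a·e(H)`. -/
theorem power_of_balanced_edge_bound
    {V W : Type*} [DecidableEq V] [DecidableEq W]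
    (k a b : ℕ) (U R : Finset V) (hRU : R ⊆ U) (ha : (U \ R).card = a)
    (T : Finset (Finset V)) (hTb : T.card = b)
    (hTk : ∀ e ∈ T, e.card = k) (hTU : ∀ e ∈ T, e ⊆ U)
    (hTnonroot : ∀ e ∈ T, (e \ R).Nonempty)
    (hbalanced : ∀ S ⊆ U \ R, S.Nonempty →
      S.card * b ≤ a * (T.filter (fun e => (e ∩ S).Nonempty)).card)
    (s : ℕ) (hs : 1 ≤ s) (f : Fin s → V → W)
    (hinj : ∀ j, Set.InjOn (f j) ↑U)
    (hroots : ∀ j, ∀ v ∈ R, f j v = f ⟨0, hs⟩ v)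
    (hnonroots : ∀ j, ∀ v ∈ U \ R, f j v ∉ R.image (f ⟨0, hs⟩)) :
    (((univ : Finset (Fin s)).biUnion (fun j => U.image (f j))).card - R.card) * b ≤
      a * ((univ : Finset (Fin s)).biUnion
            (fun j => T.image (fun e => e.image (f j)))).card := by
  classical
  set f0 := f ⟨0, hs⟩ with hf0
  set Rimg := R.image f0 with hRimg
  set PV : Fin s → Finset W := fun j =>
    Rimg ∪ (univ.filter (· < j)).biUnion (fun i => U.image (f i)) with hPV
  set NV : Fin s → Finset W := fun j => U.image (f j) \ PV j with hNV
  set Sj : Fin s → Finset V := fun j => (U \ R).filter (fun v => f j v ∈ NV j) with hSj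
  set NE : Fin s → Finset (Finset W) := fun j =>
    (T.image (fun e => e.image (f j))).filter (fun e' => (e' ∩ NV j).Nonempty) with hNE
  -- basic facts
  have hRsub : ∀ j : Fin s, Rimg ⊆ U.image (f j) := by
    intro j w hw
    obtain ⟨v, hv, rfl⟩ := mem_image.1 hw
    exact mem_image.2 ⟨v, hRU hv, (hroots j v hv).symm ▸ rfl⟩
  have hNVsub : ∀ j, NV j ⊆ U.image (f j) := fun j => sdiff_subset
  have hNVdisj : ∀ i j : Fin s, i < j → Disjoint (U.image (f i)) (NV j) := by
    intro i j hij
    have h1 : U.image (f i) ⊆ PV j := by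
      intro w hw
      exact mem_union_right _ (mem_biUnion.2 ⟨i, mem_filter.2 ⟨mem_univ _, hij⟩, hw⟩)
    exact disjoint_sdiff.mono_left h1
  -- Claim A : NV j = image of Sj j
  have claimA : ∀ j, NV j = (Sj j).image (f j) := by
    intro j
    ext w
    constructor
    · intro hw
      have hw' := hw
      rw [hNV, mem_sdiff] at hw'
      obtain ⟨hw1, hw2⟩ := hw'
      obtain ⟨v, hvU, rfl⟩ := mem_image.1 hw1
      have hvR : v ∉ R := by
        intro hvR
        exact hw2 (mem_union_left _ (by rw [hroots j v hvR]; exact mem_image_of_mem f0 hvR))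
      exact mem_image.2 ⟨v, mem_filter.2 ⟨mem_sdiff.2 ⟨hvU, hvR⟩, hw⟩, rfl⟩
    · intro hw
      obtain ⟨v, hv, rfl⟩ := mem_image.1 hw
      exact (mem_filter.1 hv).2
  have hSjU : ∀ j, ↑(Sj j) ⊆ (↑U : Set V) := by
    intro j v hv
    have := (mem_filter.1 hv).1
    exact (mem_sdiff.1 this).1
  have claimB : ∀ j, (NV j).card = (Sj j).card := by
    intro j
    rw [claimA j]
    exact card_image_of_injOn ((hinj j).mono (hSjU j))
  have hSjsub : ∀ j, Sj j ⊆ U \ R := fun j => filter_subset _ _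
  have claimC : ∀ j, (Sj j).card * b ≤ a * (T.filter (fun e => (e ∩ Sj j).Nonempty)).card := by
    intro j
    rcases (Sj j).eq_empty_or_nonempty with h | h
    · simp [h]
    · exact hbalanced (Sj j) (hSjsub j) h
  have claimD : ∀ j, (T.filter (fun e => (e ∩ Sj j).Nonempty)).card ≤ (NE j).card := by
    intro j
    apply card_le_card_of_injOn (fun e => e.image (f j))
    · intro e he
      obtain ⟨heT, hne⟩ := mem_filter.1 he
      obtain ⟨v, hv⟩ := hne
      obtain ⟨hve, hvS⟩ := mem_inter.1 hv
      refine mem_filter.2 ⟨mem_image_of_mem _ heT, ⟨f j v, mem_inter.2 ⟨mem_image_of_mem _ hve, ?_⟩⟩⟩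
      exact (mem_filter.1 hvS).2
    · intro e₁ h₁ e₂ h₂ heq
      have heq' : e₁.image (f j) = e₂.image (f j) := heq
      have h₁T := (mem_filter.1 (mem_coe.1 h₁)).1
      have h₂T := (mem_filter.1 (mem_coe.1 h₂)).1
      apply Finset.Subset.antisymm
      · intro x hx
        have : f j x ∈ e₂.image (f j) := heq' ▸ mem_image_of_mem _ hx
        obtain ⟨y, hy, hyx⟩ := mem_image.1 this
        rwa [← hinj j (hTU e₂ h₂T hy) (hTU e₁ h₁T hx) hyx]
      · intro x hx
        have : f j x ∈ e₁.image (f j) := heq' ▸ mem_image_of_mem _ hx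
        obtain ⟨y, hy, hyx⟩ := mem_image.1 this
        rwa [← hinj j (hTU e₁ h₁T hy) (hTU e₂ h₂T hx) hyx]
  -- Claim E : union of NV = H \ Rimg
  have claimE : (univ : Finset (Fin s)).biUnion NV =
      ((univ : Finset (Fin s)).biUnion (fun j => U.image (f j))) \ Rimg := by
    ext w
    constructor
    · intro hw
      obtain ⟨j, _, hwj⟩ := mem_biUnion.1 hw
      have hw' := mem_sdiff.1 hwj
      refine mem_sdiff.2 ⟨mem_biUnion.2 ⟨j, mem_univ _, hw'.1⟩, fun hR => hw'.2 (mem_union_left _ hR)⟩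
    · intro hw
      obtain ⟨hwH, hwR⟩ := mem_sdiff.1 hw
      obtain ⟨j₀, _, hwj₀⟩ := mem_biUnion.1 hwH
      set F := univ.filter (fun j : Fin s => w ∈ U.image (f j)) with hF
      have hFne : F.Nonempty := ⟨j₀, mem_filter.2 ⟨mem_univ _, hwj₀⟩⟩
      set j := F.min' hFne with hj
      refine mem_biUnion.2 ⟨j, mem_univ _, mem_sdiff.2 ⟨(mem_filter.1 (F.min'_mem hFne)).2, ?_⟩⟩
      intro hPVj
      rcases mem_union.1 hPVj with h | h
      · exact hwR h
      · obtain ⟨i, hi, hwi⟩ := mem_biUnion.1 h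
        have hij : i < j := (mem_filter.1 hi).2
        have : j ≤ i := F.min'_le i (mem_filter.2 ⟨mem_univ _, hwi⟩)
        exact absurd hij (not_lt.2 this)
  have hNVpair : ∀ i ∈ (univ : Finset (Fin s)), ∀ j ∈ (univ : Finset (Fin s)),
      i ≠ j → Disjoint (NV i) (NV j) := by
    intro i _ j _ hij
    rcases hij.lt_or_gt with h | h
    · exact ((hNVdisj i j h).mono_left (hNVsub i)).symm.symm
    · exact ((hNVdisj j i h).mono_left (hNVsub j)).symm
  have hNEpair : ∀ i ∈ (univ : Finset (Fin s)), ∀ j ∈ (univ : Finset (Fin s)),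
      i ≠ j → Disjoint (NE i) (NE j) := by
    have key : ∀ i j : Fin s, i < j → Disjoint (NE i) (NE j) := by
      intro i j hij
      rw [Finset.disjoint_left]
      intro e' h1 h2
      obtain ⟨he'1, _⟩ := mem_filter.1 h1
      obtain ⟨_, hne⟩ := mem_filter.1 h2
      obtain ⟨w, hw⟩ := hne
      obtain ⟨hwe, hwNV⟩ := mem_inter.1 hw
      obtain ⟨e, heT, rfl⟩ := mem_image.1 he'1
      obtain ⟨v, hve, rfl⟩ := mem_image.1 hwe
      have : f i v ∈ U.image (f i) := mem_image_of_mem _ (hTU e heT hve)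
      exact (Finset.disjoint_left.1 (hNVdisj i j hij)) this hwNV
    intro i _ j _ hij
    rcases hij.lt_or_gt with h | h
    · exact key i j h
    · exact (key j i h).symm
  -- sums
  have hsumNV : ∑ j : Fin s, (NV j).card =
      ((univ : Finset (Fin s)).biUnion (fun j => U.image (f j))).card - R.card := by
    rw [← card_biUnion hNVpair, claimE, card_sdiff_of_subset]
    · congr 1
      rw [hRimg]
      exact card_image_of_injOn ((hinj ⟨0, hs⟩).mono (by exact_mod_cast hRU))
    · intro w hw
      exact mem_biUnion.2 ⟨⟨0, hs⟩, mem_univ _, hRsub ⟨0, hs⟩ hw⟩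
  have hsumNE : ∑ j : Fin s, (NE j).card ≤
      ((univ : Finset (Fin s)).biUnion (fun j => T.image (fun e => e.image (f j)))).card := by
    rw [← card_biUnion hNEpair]
    apply card_le_card
    intro e' he'
    obtain ⟨j, _, hj⟩ := mem_biUnion.1 he'
    exact mem_biUnion.2 ⟨j, mem_univ _, (mem_filter.1 hj).1⟩
  calc (((univ : Finset (Fin s)).biUnion (fun j => U.image (f j))).card - R.card) * b
      = (∑ j : Fin s, (NV j).card) * b := by rw [hsumNV]
    _ = ∑ j : Fin s, (NV j).card * b := by rw [Finset.sum_mul]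
    _ = ∑ j : Fin s, (Sj j).card * b := by
        apply Finset.sum_congr rfl; intro j _; rw [claimB]
    _ ≤ ∑ j : Fin s, a * (T.filter (fun e => (e ∩ Sj j).Nonempty)).card := by
        exact Finset.sum_le_sum fun j _ => claimC j
    _ ≤ ∑ j : Fin s, a * (NE j).card := by
        exact Finset.sum_le_sum fun j _ => Nat.mul_le_mul_left a (claimD j)
    _ = a * ∑ j : Fin s, (NE j).card := by rw [Finset.mul_sum]
    _ ≤ a * ((univ : Finset (Fin s)).biUnion
            (fun j => T.image (fun e => e.image (f j)))).card :=
        Nat.mul_le_mul_left a hsumNE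
end

section
/- Let F be a family of l-uniform hypergraphs, each containing two disjoint edges, and let k > l. Define F' to consist of (F, x_1, ..., x_{k-l}) for each F in F — obtained by adding k-l new common vertices x_1,...,x_{k-l} to every edge of F — together with all k-uniform hypergraphs with at most l+2 edges whose edges do not all share a common (k-l)-set. Then ex(n + k - l, F') = ex(n, F) for all n. -/
open Finset

/-- `G` contains the hypergraph `F` as a subgraph: some injective (on the vertices of
`F`) map sends every edge of `F` to an edge of `G`. -/
def HContains (G F : Finset (Finset ℕ)) : Prop :=
  ∃ f : ℕ → ℕ, Set.InjOn f ↑(F.sup id) ∧ ∀ e ∈ F, e.image f ∈ G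

/-- The Turán number `ex(n, Fam)` for a family `Fam` of hypergraphs: the maximum number
of edges of a `k`-uniform hypergraph on `n` vertices containing no member of `Fam` as a
subgraph. -/
noncomputable def exNum (n k : ℕ) (Fam : Set (Finset (Finset ℕ))) : ℕ :=
  sSup {m | ∃ G : Finset (Finset ℕ), (∀ e ∈ G, e.card = k) ∧
    G.sup id ⊆ Finset.range n ∧ (∀ F ∈ Fam, ¬ HContains G F) ∧ G.card = m}

/-- `(F, x_1, ..., x_j)`: the hypergraph obtained from `F` by adding `j` new common
vertices to every edge (the old vertices are relabelled `v ↦ v + j`, and the new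
vertices are `0, ..., j-1`). -/
def addApex (j : ℕ) (F : Finset (Finset ℕ)) : Finset (Finset ℕ) :=
  F.image (fun e => (e.image (· + j)) ∪ Finset.range j)

lemma exNum_bddAbove (n k : ℕ) (Fam : Set (Finset (Finset ℕ))) :
    BddAbove {m | ∃ G : Finset (Finset ℕ), (∀ e ∈ G, e.card = k) ∧
      G.sup id ⊆ Finset.range n ∧ (∀ F ∈ Fam, ¬ HContains G F) ∧ G.card = m} := by
  refine ⟨2 ^ n, fun m hm => ?_⟩
  obtain ⟨G, _, hsub, _, rfl⟩ := hm
  have : G ⊆ (Finset.range n).powerset := by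
    intro e he
    simp only [mem_powerset]
    exact (Finset.le_sup (f := id) he).trans hsub
  simpa using Finset.card_le_card this


lemma le_exNum {n k : ℕ} {Fam : Set (Finset (Finset ℕ))} {G : Finset (Finset ℕ)}
    (h1 : ∀ e ∈ G, e.card = k) (h2 : G.sup id ⊆ Finset.range n)
    (h3 : ∀ F ∈ Fam, ¬ HContains G F) : G.card ≤ exNum n k Fam :=
  le_csSup (exNum_bddAbove n k Fam) ⟨G, h1, h2, h3, rfl⟩


lemma exNum_spec (n k : ℕ) (Fam : Set (Finset (Finset ℕ)))
    (hne : ∀ F ∈ Fam, F.Nonempty) :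
    ∃ G : Finset (Finset ℕ), (∀ e ∈ G, e.card = k) ∧
      G.sup id ⊆ Finset.range n ∧ (∀ F ∈ Fam, ¬ HContains G F) ∧
      G.card = exNum n k Fam := by
  have h0 : (0 : ℕ) ∈ {m | ∃ G : Finset (Finset ℕ), (∀ e ∈ G, e.card = k) ∧
      G.sup id ⊆ Finset.range n ∧ (∀ F ∈ Fam, ¬ HContains G F) ∧ G.card = m} := by
    refine ⟨∅, by simp, by simp, fun F hF hc => ?_, by simp⟩
    obtain ⟨f, _, hmap⟩ := hc
    obtain ⟨e, he⟩ := hne F hF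
    exact absurd (hmap e he) (Finset.notMem_empty _)
  have := Nat.sSup_mem ⟨0, h0⟩ (exNum_bddAbove n k Fam)
  obtain ⟨G, h1, h2, h3, h4⟩ := this
  exact ⟨G, h1, h2, h3, h4⟩


lemma helly (j k : ℕ) (hjk : j ≤ k) :
    ∀ G : Finset (Finset ℕ), (∀ e ∈ G, e.card = k) →
    (∀ H ⊆ G, H.card ≤ k - j + 2 → ∃ S : Finset ℕ, S.card = j ∧ ∀ e ∈ H, S ⊆ e) →
    G.Nonempty → ∃ S : Finset ℕ, S.card = j ∧ ∀ e ∈ G, S ⊆ e := by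
  intro G
  induction G using Finset.strongInduction with
  | _ G ih =>
    intro hk hH hne
    by_cases hsmall : G.card ≤ k - j + 2
    · exact hH G Finset.Subset.rfl hsmall
    push_neg at hsmall
    have step : ∀ e ∈ G, ∃ S : Finset ℕ, S.card = j ∧ ∀ f ∈ G.erase e, S ⊆ f := by
      intro e he
      refine ih (G.erase e) (Finset.erase_ssubset he)
        (fun f hf => hk f (Finset.mem_of_mem_erase hf))
        (fun H hHs hHc => hH H (hHs.trans (Finset.erase_subset _ _)) hHc) ?_
      rw [← Finset.card_pos, Finset.card_erase_of_mem he]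
      omega
    by_cases hgood : ∃ e ∈ G, ∃ S : Finset ℕ, S.card = j ∧ (∀ f ∈ G.erase e, S ⊆ f) ∧ S ⊆ e
    · obtain ⟨e, he, S, hS1, hS2, hS3⟩ := hgood
      refine ⟨S, hS1, fun f hf => ?_⟩
      by_cases h : f = e
      · exact h ▸ hS3
      · exact hS2 f (Finset.mem_erase.2 ⟨h, hf⟩)
    push_neg at hgood
    have hx : ∀ e, ∃ x : ℕ, e ∈ G → (x ∉ e ∧ ∀ f ∈ G.erase e, x ∈ f) := by
      intro e
      by_cases he : e ∈ G
      · obtain ⟨S, hS1, hS2⟩ := step e he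
        have hns : ¬ S ⊆ e := fun h => hgood e he S hS1 hS2 h
        obtain ⟨x, hxS, hxe⟩ := Finset.not_subset.1 hns
        exact ⟨x, fun _ => ⟨hxe, fun f hf => hS2 f hf hxS⟩⟩
      · exact ⟨0, fun h => absurd h he⟩
    choose x hx using hx
    obtain ⟨e₀, he₀, e₁, he₁, hne01⟩ := Finset.one_lt_card.1 (by omega : 1 < G.card)
    obtain ⟨S₁, hS₁card, hS₁sub⟩ := step e₁ he₁
    set T := ((G.erase e₀).erase e₁).image x with hT
    have hmemG : ∀ e ∈ (G.erase e₀).erase e₁, e ∈ G := fun e he =>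
      Finset.mem_of_mem_erase (Finset.mem_of_mem_erase he)
    have hTsub : T ⊆ e₀ := by
      intro y hy
      obtain ⟨e, he, rfl⟩ := Finset.mem_image.1 hy
      have heG := hmemG e he
      have hne0 : e₀ ≠ e := by
        intro h; exact (Finset.mem_erase.1 (Finset.mem_of_mem_erase he)).1 h.symm
      exact (hx e heG).2 e₀ (Finset.mem_erase.2 ⟨hne0, he₀⟩)
    have hS₁e₀ : S₁ ⊆ e₀ := hS₁sub e₀ (Finset.mem_erase.2 ⟨hne01, he₀⟩)
    have hdisjST : Disjoint S₁ T := by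
      rw [Finset.disjoint_right]
      intro y hy hyS
      obtain ⟨e, he, rfl⟩ := Finset.mem_image.1 hy
      have heG := hmemG e he
      have hne1 : e ≠ e₁ := (Finset.mem_erase.1 he).1
      exact (hx e heG).1 (hS₁sub e (Finset.mem_erase.2 ⟨hne1, heG⟩) hyS)
    have hinjx : Set.InjOn x ↑((G.erase e₀).erase e₁) := by
      intro a ha b hb hab
      by_contra hne2
      have haG := hmemG a (Finset.mem_coe.1 ha)
      have hbG := hmemG b (Finset.mem_coe.1 hb)
      have : x b ∈ a := (hx b hbG).2 a (Finset.mem_erase.2 ⟨fun h => hne2 h, haG⟩)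
      rw [← hab] at this
      exact (hx a haG).1 this
    have hTcard : T.card = G.card - 2 := by
      rw [hT, Finset.card_image_of_injOn hinjx,
        Finset.card_erase_of_mem (Finset.mem_erase.2 ⟨hne01.symm, he₁⟩),
        Finset.card_erase_of_mem he₀]
      omega
    have hle : (S₁ ∪ T).card ≤ e₀.card := Finset.card_le_card (Finset.union_subset hS₁e₀ hTsub)
    rw [Finset.card_union_of_disjoint hdisjST, hk e₀ he₀, hS₁card, hTcard] at hle
    omega


lemma core_filter (j : ℕ) (G' H : Finset (Finset ℕ)) (f : ℕ → ℕ)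
    (hf : Set.InjOn f ↑(H.sup id)) (hmap : ∀ e ∈ H, e.image f ∈ G')
    (hapex : ∀ E ∈ G', Finset.range j ⊆ E) :
    (∀ e ∈ H, (e.filter (fun v => f v < j)).image f = Finset.range j) ∧
    (∀ e₁ ∈ H, ∀ e₂ ∈ H,
      e₁.filter (fun v => f v < j) = e₂.filter (fun v => f v < j)) := by
  have hsub : ∀ e ∈ H, ∀ v ∈ e, (v : ℕ) ∈ (↑(H.sup id) : Set ℕ) := by
    intro e he v hv
    exact Finset.mem_coe.2 ((Finset.le_sup (f := id) he) hv)
  have himg : ∀ e ∈ H, (e.filter (fun v => f v < j)).image f = Finset.range j := by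
    intro e he
    apply Finset.Subset.antisymm
    · intro b hb
      obtain ⟨v, hv, rfl⟩ := Finset.mem_image.1 hb
      exact Finset.mem_range.2 (Finset.mem_filter.1 hv).2
    · intro i hi
      have : i ∈ e.image f := hapex _ (hmap e he) hi
      obtain ⟨v, hv, rfl⟩ := Finset.mem_image.1 this
      exact Finset.mem_image.2 ⟨v, Finset.mem_filter.2 ⟨hv, Finset.mem_range.1 hi⟩, rfl⟩
  refine ⟨himg, ?_⟩
  have key : ∀ e₁ ∈ H, ∀ e₂ ∈ H,
      e₁.filter (fun v => f v < j) ⊆ e₂.filter (fun v => f v < j) := by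
    intro e₁ h₁ e₂ h₂ v hv
    obtain ⟨hv₁, hvj⟩ := Finset.mem_filter.1 hv
    have : f v ∈ (e₂.filter (fun v => f v < j)).image f := by
      rw [himg e₂ h₂]; exact Finset.mem_range.2 hvj
    obtain ⟨w, hw, hwv⟩ := Finset.mem_image.1 this
    have hww : w = v := hf (hsub e₂ h₂ w (Finset.mem_filter.1 hw).1) (hsub e₁ h₁ v hv₁) hwv
    exact hww ▸ hw
  exact fun e₁ h₁ e₂ h₂ => Finset.Subset.antisymm (key e₁ h₁ e₂ h₂) (key e₂ h₂ e₁ h₁)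


lemma apex_disj (j : ℕ) (e : Finset ℕ) : Disjoint (e.image (· + j)) (Finset.range j) := by
  rw [Finset.disjoint_left]
  intro a ha hb
  obtain ⟨v, _, rfl⟩ := Finset.mem_image.1 ha
  rw [Finset.mem_range] at hb
  omega


lemma apex_sdiff (j : ℕ) (e : Finset ℕ) :
    ((e.image (· + j)) ∪ Finset.range j) \ Finset.range j = e.image (· + j) := by
  rw [Finset.union_sdiff_right, Finset.sdiff_eq_self_iff_disjoint.2 (apex_disj j e)]


lemma addj_inj (j : ℕ) : Function.Injective (· + j : ℕ → ℕ) := fun x y h => Nat.add_right_cancel h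


lemma lower_bound (k l n : ℕ) (hlk : l < k) (Fam : Set (Finset (Finset ℕ)))
    (huniform : ∀ F ∈ Fam, ∀ e ∈ F, e.card = l)
    (hdisj : ∀ F ∈ Fam, ∃ e₁ ∈ F, ∃ e₂ ∈ F, e₁ ≠ e₂ ∧ Disjoint e₁ e₂) :
    exNum n l Fam ≤ exNum (n + (k - l)) k
      ({G | ∃ F ∈ Fam, G = addApex (k - l) F} ∪
       {G | (∀ e ∈ G, e.card = k) ∧ G.card ≤ l + 2 ∧
          ¬ ∃ S : Finset ℕ, S.card = k - l ∧ ∀ e ∈ G, S ⊆ e}) := by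
  set j := k - l with hjdef
  have hlj : l + j = k := by omega
  obtain ⟨G, hGk, hGsub, hGav, hGcard⟩ := exNum_spec n l Fam (fun F hF => by
    obtain ⟨e₁, he₁, _⟩ := hdisj F hF; exact ⟨e₁, he₁⟩)
  rw [← hGcard]
  set G' := addApex j G with hG'def
  have hmemG' : ∀ E, E ∈ G' ↔ ∃ e ∈ G, (e.image (· + j)) ∪ Finset.range j = E := by
    intro E; rw [hG'def, addApex, Finset.mem_image]
  have hcard' : G'.card = G.card := by
    rw [hG'def, addApex]
    apply Finset.card_image_of_injOn
    intro a _ b _ hab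
    have h1 : a.image (· + j) = b.image (· + j) := by
      have h2 := congrArg (· \ Finset.range j) hab
      simpa only [apex_sdiff] using h2
    exact Finset.image_injective (addj_inj j) h1
  rw [← hcard']
  have hapex : ∀ E ∈ G', Finset.range j ⊆ E := by
    intro E hE
    obtain ⟨e, _, rfl⟩ := (hmemG' E).1 hE
    exact Finset.subset_union_right
  apply le_exNum
  · intro E hE
    obtain ⟨e, he, rfl⟩ := (hmemG' E).1 hE
    rw [Finset.card_union_of_disjoint (apex_disj j e),
      Finset.card_image_of_injective _ (addj_inj j), hGk e he, Finset.card_range]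
    exact hlj
  · intro v hv
    rw [Finset.mem_sup] at hv
    obtain ⟨E, hE, hvE⟩ := hv
    obtain ⟨e, he, rfl⟩ := (hmemG' E).1 hE
    simp only [id_eq] at hvE
    rcases Finset.mem_union.1 hvE with h | h
    · obtain ⟨w, hw, rfl⟩ := Finset.mem_image.1 h
      have hwn : w ∈ Finset.range n := hGsub ((Finset.le_sup (f := id) he) hw)
      rw [Finset.mem_range] at hwn ⊢
      omega
    · rw [Finset.mem_range] at h ⊢
      omega
  · rintro F' hF' ⟨f, hfinj, hfmap⟩
    rcases hF' with ⟨F, hF, rfl⟩ | ⟨hu, hc, hno⟩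
    · -- F' = addApex j F for F ∈ Fam
      obtain ⟨e₁, he₁, e₂, he₂, hne12, hd12⟩ := hdisj F hF
      obtain ⟨himg, hsame⟩ := core_filter j G' (addApex j F) f hfinj hfmap hapex
      have hmemA : ∀ e ∈ F, (e.image (· + j)) ∪ Finset.range j ∈ addApex j F := by
        intro e he; exact Finset.mem_image.2 ⟨e, he, rfl⟩
      set e₁' := (e₁.image (· + j)) ∪ Finset.range j with he₁'def
      set e₂' := (e₂.image (· + j)) ∪ Finset.range j with he₂'def
      set S := e₁'.filter (fun v => f v < j) with hSdef
      have hsupA : ∀ e ∈ addApex j F, ∀ v ∈ e, (v : ℕ) ∈ (↑((addApex j F).sup id) : Set ℕ) :=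
        fun e he v hv => Finset.mem_coe.2 ((Finset.le_sup (f := id) he) hv)
      have hScard : S.card = j := by
        have h1 := himg e₁' (hmemA e₁ he₁)
        have h2 : Set.InjOn f ↑S := fun a ha b hb h =>
          hfinj (hsupA e₁' (hmemA e₁ he₁) a ((Finset.filter_subset _ _) ha))
            (hsupA e₁' (hmemA e₁ he₁) b ((Finset.filter_subset _ _) hb)) h
        calc S.card = (S.image f).card := (Finset.card_image_of_injOn h2).symm
          _ = j := by rw [← hSdef] at h1; rw [h1, Finset.card_range]
      have hSsub : S ⊆ Finset.range j := by
        intro x hx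
        have hx1 : x ∈ e₁' := (Finset.filter_subset _ _) hx
        have hx2 : x ∈ e₂' := by
          have := hsame e₁' (hmemA e₁ he₁) e₂' (hmemA e₂ he₂)
          rw [← hSdef] at this
          exact (Finset.filter_subset _ _) (this ▸ hx)
        rcases Finset.mem_union.1 hx1 with h1 | h1
        · rcases Finset.mem_union.1 hx2 with h2 | h2
          · obtain ⟨v, hv, rfl⟩ := Finset.mem_image.1 h1
            obtain ⟨w, hw, hwx⟩ := Finset.mem_image.1 h2
            have : w = v := Nat.add_right_cancel hwx
            subst this
            exact absurd hv (Finset.disjoint_right.1 hd12 hw)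
          · exact h2
        · exact h1
      have hSeq : S = Finset.range j :=
        Finset.eq_of_subset_of_card_le hSsub (by rw [Finset.card_range, hScard])
      have hrange_img : (Finset.range j).image f = Finset.range j := by
        conv_lhs => rw [← hSeq]
        have h1 := himg e₁' (hmemA e₁ he₁)
        rw [← hSdef] at h1
        exact h1
      have hge : ∀ e ∈ F, ∀ v ∈ e, j ≤ f (v + j) := by
        intro e he v hv
        by_contra hcon
        push_neg at hcon
        have h1 : v + j ∈ ((e.image (· + j)) ∪ Finset.range j).filter (fun v => f v < j) :=
          Finset.mem_filter.2 ⟨Finset.mem_union_left _ (Finset.mem_image.2 ⟨v, hv, rfl⟩), hcon⟩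
        rw [hsame _ (hmemA e he) e₁' (hmemA e₁ he₁), ← hSdef, hSeq, Finset.mem_range] at h1
        omega
      set φ : ℕ → ℕ := fun v => f (v + j) - j with hφdef
      have hφmap : ∀ e ∈ F, e.image φ ∈ G := by
        intro e he
        have hmem := hfmap _ (hmemA e he)
        obtain ⟨g, hg, hgeq⟩ := (hmemG' _).1 hmem
        have h2 : ((e.image (· + j)) ∪ Finset.range j).image f
            = (e.image (· + j)).image f ∪ Finset.range j := by
          rw [Finset.image_union, hrange_img]
        have hdisjX : Disjoint ((e.image (· + j)).image f) (Finset.range j) := by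
          rw [Finset.disjoint_left]
          intro a ha hb
          obtain ⟨x, hx, rfl⟩ := Finset.mem_image.1 ha
          obtain ⟨v, hv, rfl⟩ := Finset.mem_image.1 hx
          rw [Finset.mem_range] at hb
          exact absurd hb (by have := hge e he v hv; omega)
        have hX : (e.image (· + j)).image f = g.image (· + j) := by
          have h3 : (e.image (· + j)).image f ∪ Finset.range j
              = (g.image (· + j)) ∪ Finset.range j := by
            rw [← h2, hgeq]
          have h4 := congrArg (· \ Finset.range j) h3
          simp only [apex_sdiff] at h4
          rwa [Finset.union_sdiff_right,
            Finset.sdiff_eq_self_iff_disjoint.2 hdisjX] at h4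
        have h5 : e.image φ = ((e.image (· + j)).image f).image (· - j) := by
          rw [Finset.image_image, Finset.image_image]
          rfl
        rw [h5, hX, Finset.image_image]
        have h6 : g.image ((· - j) ∘ (· + j)) = g := by
          rw [show ((· - j) ∘ (· + j) : ℕ → ℕ) = id from funext fun v => by
            simp only [Function.comp, id_eq]; omega]
          exact Finset.image_id
        rwa [h6]
      have hsupF : ∀ v ∈ (↑(F.sup id) : Set ℕ), ∃ e ∈ F, v ∈ e := by
        intro v hv
        have := Finset.mem_coe.1 hv
        rw [Finset.mem_sup] at this
        obtain ⟨e, he, hve⟩ := this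
        exact ⟨e, he, by simpa using hve⟩
      have hφinj : Set.InjOn φ ↑(F.sup id) := by
        intro v hv w hw h
        obtain ⟨ev, hev, hvev⟩ := hsupF v hv
        obtain ⟨ew, hew, hwew⟩ := hsupF w hw
        have hv' : (v + j : ℕ) ∈ (↑((addApex j F).sup id) : Set ℕ) :=
          hsupA _ (hmemA ev hev) _ (Finset.mem_union_left _ (Finset.mem_image.2 ⟨v, hvev, rfl⟩))
        have hw' : (w + j : ℕ) ∈ (↑((addApex j F).sup id) : Set ℕ) :=
          hsupA _ (hmemA ew hew) _ (Finset.mem_union_left _ (Finset.mem_image.2 ⟨w, hwew, rfl⟩))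
        have h1 := hge ev hev v hvev
        have h2 := hge ew hew w hwew
        have h3 : f (v + j) = f (w + j) := by
          have := h
          simp only [hφdef] at this
          omega
        have := hfinj hv' hw' h3
        omega
      exact hGav F hF ⟨φ, hφinj, hφmap⟩
    · -- F' has no common (k-l)-set
      rcases F'.eq_empty_or_nonempty with rfl | ⟨e₀, he₀⟩
      · exact hno ⟨Finset.range j, Finset.card_range j, fun e he => absurd he (Finset.notMem_empty _)⟩
      · obtain ⟨himg, hsame⟩ := core_filter j G' F' f hfinj hfmap hapex
        set S := e₀.filter (fun v => f v < j) with hSdef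
        have hsupA : ∀ e ∈ F', ∀ v ∈ e, (v : ℕ) ∈ (↑(F'.sup id) : Set ℕ) :=
          fun e he v hv => Finset.mem_coe.2 ((Finset.le_sup (f := id) he) hv)
        have hScard : S.card = j := by
          have h1 := himg e₀ he₀
          have h2 : Set.InjOn f ↑S := fun a ha b hb h =>
            hfinj (hsupA e₀ he₀ a ((Finset.filter_subset _ _) ha))
              (hsupA e₀ he₀ b ((Finset.filter_subset _ _) hb)) h
          calc S.card = (S.image f).card := (Finset.card_image_of_injOn h2).symm
            _ = j := by rw [← hSdef] at h1; rw [h1, Finset.card_range]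
        refine hno ⟨S, hScard, fun e he => ?_⟩
        rw [hSdef, hsame e₀ he₀ e he]
        exact Finset.filter_subset _ _


lemma upper_bound (k l n : ℕ) (hlk : l < k) (Fam : Set (Finset (Finset ℕ)))
    (hdisj : ∀ F ∈ Fam, ∃ e₁ ∈ F, ∃ e₂ ∈ F, e₁ ≠ e₂ ∧ Disjoint e₁ e₂) :
    exNum (n + (k - l)) k
      ({G | ∃ F ∈ Fam, G = addApex (k - l) F} ∪
       {G | (∀ e ∈ G, e.card = k) ∧ G.card ≤ l + 2 ∧
          ¬ ∃ S : Finset ℕ, S.card = k - l ∧ ∀ e ∈ G, S ⊆ e}) ≤ exNum n l Fam := by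
  set j := k - l with hjdef
  set Fam' := ({G | ∃ F ∈ Fam, G = addApex j F} ∪
       {G | (∀ e ∈ G, e.card = k) ∧ G.card ≤ l + 2 ∧
          ¬ ∃ S : Finset ℕ, S.card = j ∧ ∀ e ∈ G, S ⊆ e} :
      Set (Finset (Finset ℕ))) with hFam'def
  have hFam'ne : ∀ F' ∈ Fam', F'.Nonempty := by
    rintro F' (⟨F, hF, rfl⟩ | ⟨hu, hc, hno⟩)
    · obtain ⟨e₁, he₁, _⟩ := hdisj F hF
      exact ⟨_, Finset.mem_image.2 ⟨e₁, he₁, rfl⟩⟩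
    · by_contra h
      rw [Finset.not_nonempty_iff_eq_empty] at h
      subst h
      exact hno ⟨Finset.range j, Finset.card_range j,
        fun e he => absurd he (Finset.notMem_empty _)⟩
  obtain ⟨G', hG'k, hG'sub, hG'av, hG'card⟩ := exNum_spec (n + j) k Fam' hFam'ne
  rw [← hG'card]
  rcases G'.eq_empty_or_nonempty with rfl | hne'
  · simp
  -- Helly gives a common j-set
  have hhelly : ∀ H ⊆ G', H.card ≤ k - j + 2 →
      ∃ S : Finset ℕ, S.card = j ∧ ∀ e ∈ H, S ⊆ e := by
    intro H hsub hcard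
    by_contra hnoS
    have hmem' : H ∈ Fam' := Or.inr ⟨fun e he => hG'k e (hsub he), by omega, hnoS⟩
    exact hG'av H hmem' ⟨id, Set.injOn_id _,
      fun e he => by rw [Finset.image_id]; exact hsub he⟩
  obtain ⟨S, hScard, hSsub⟩ := helly j k (by omega) G' hG'k hhelly hne'
  have hSrange : S ⊆ Finset.range (n + j) := by
    obtain ⟨E₀, hE₀⟩ := hne'
    exact (hSsub E₀ hE₀).trans ((Finset.le_sup (f := id) hE₀).trans hG'sub)
  set A := Finset.range (n + j) \ S with hAdef
  have hAcard : A.card = n := by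
    rw [hAdef, Finset.card_sdiff_of_subset hSrange, Finset.card_range, hScard]
    omega
  set r : ℕ → ℕ := fun v => (A.filter (· < v)).card with hrdef
  have hrmono : ∀ a ∈ A, ∀ b ∈ A, a < b → r a < r b := by
    intro a ha b hb hab
    apply Finset.card_lt_card
    have hsub2 : A.filter (· < a) ⊆ A.filter (· < b) := by
      intro x hx
      rw [Finset.mem_filter] at hx ⊢
      exact ⟨hx.1, lt_trans hx.2 hab⟩
    rw [Finset.ssubset_iff_of_subset hsub2]
    exact ⟨a, Finset.mem_filter.2 ⟨ha, hab⟩, by simp⟩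
  have hrinj : Set.InjOn r ↑A := by
    intro a ha b hb h
    by_contra hne
    rcases lt_or_gt_of_ne hne with h1 | h1
    · exact absurd h (Nat.ne_of_lt (hrmono a (Finset.mem_coe.1 ha) b (Finset.mem_coe.1 hb) h1))
    · exact absurd h.symm (Nat.ne_of_lt (hrmono b (Finset.mem_coe.1 hb) a (Finset.mem_coe.1 ha) h1))
  have hrA : ∀ a ∈ A, r a ∈ Finset.range n := by
    intro a ha
    rw [Finset.mem_range, ← hAcard]
    apply Finset.card_lt_card
    rw [Finset.ssubset_iff_of_subset (Finset.filter_subset _ _)]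
    exact ⟨a, ha, by simp⟩
  set Φ : Finset ℕ → Finset ℕ := fun E => (E \ S).image r with hΦdef
  set G := G'.image Φ with hGdef
  have hES_A : ∀ E ∈ G', E \ S ⊆ A := by
    intro E hE x hx
    rw [hAdef, Finset.mem_sdiff]
    exact ⟨((Finset.le_sup (f := id) hE).trans hG'sub) (Finset.mem_sdiff.1 hx).1,
      (Finset.mem_sdiff.1 hx).2⟩
  have hΦinj : ∀ E₁ ∈ G', ∀ E₂ ∈ G', Φ E₁ = Φ E₂ → E₁ = E₂ := by
    have key : ∀ Ea ∈ G', ∀ Eb ∈ G', Φ Ea = Φ Eb → Ea \ S ⊆ Eb \ S := by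
      intro Ea hEa Eb hEb hab x hx
      have hmem : r x ∈ Φ Eb := hab ▸ Finset.mem_image.2 ⟨x, hx, rfl⟩
      obtain ⟨w, hw, hwx⟩ := Finset.mem_image.1 hmem
      have := hrinj (Finset.mem_coe.2 (hES_A Eb hEb hw))
        (Finset.mem_coe.2 (hES_A Ea hEa hx)) hwx
      rwa [← this]
    intro E₁ h₁ E₂ h₂ h
    have hsd : E₁ \ S = E₂ \ S :=
      Finset.Subset.antisymm (key E₁ h₁ E₂ h₂ h) (key E₂ h₂ E₁ h₁ h.symm)
    calc E₁ = S ∪ E₁ \ S := (Finset.union_sdiff_of_subset (hSsub E₁ h₁)).symm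
      _ = S ∪ E₂ \ S := by rw [hsd]
      _ = E₂ := Finset.union_sdiff_of_subset (hSsub E₂ h₂)
  have hGcard : G.card = G'.card :=
    Finset.card_image_of_injOn (fun a ha b hb h =>
      hΦinj a (Finset.mem_coe.1 ha) b (Finset.mem_coe.1 hb) h)
  rw [← hGcard]
  apply le_exNum
  · intro X hX
    obtain ⟨E, hE, rfl⟩ := Finset.mem_image.1 hX
    have : Set.InjOn r ↑(E \ S) := fun a ha b hb h =>
      hrinj (Finset.mem_coe.2 (hES_A E hE (Finset.mem_coe.1 ha)))
        (Finset.mem_coe.2 (hES_A E hE (Finset.mem_coe.1 hb))) h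
    rw [hΦdef]
    rw [Finset.card_image_of_injOn this, Finset.card_sdiff_of_subset (hSsub E hE),
      hG'k E hE, hScard]
    omega
  · intro v hv
    rw [Finset.mem_sup] at hv
    obtain ⟨X, hX, hvX⟩ := hv
    obtain ⟨E, hE, rfl⟩ := Finset.mem_image.1 hX
    simp only [id_eq] at hvX
    obtain ⟨w, hw, rfl⟩ := Finset.mem_image.1 hvX
    exact hrA w (hES_A E hE hw)
  · rintro F hF ⟨f, hfinj, hfmap⟩
    apply hG'av (addApex j F) (Or.inl ⟨F, hF, rfl⟩)
    obtain ⟨σ, hσmem, hσinj⟩ : ∃ σ : ℕ → ℕ, (∀ i, i < j → σ i ∈ S) ∧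
        (∀ i, i < j → ∀ i', i' < j → σ i = σ i' → i = i') := by
      refine ⟨fun i => if h : i < j then ((S.orderIsoOfFin hScard ⟨i, h⟩ : S) : ℕ) else 0,
        ?_, ?_⟩
      · intro i hi
        simp only [dif_pos hi]
        exact Finset.coe_mem _
      · intro i hi i' hi' h
        simp only [dif_pos hi, dif_pos hi'] at h
        exact congrArg Fin.val ((S.orderIsoOfFin hScard).injective (Subtype.coe_injective h))
    obtain ⟨inv, hinvspec⟩ : ∃ inv : ℕ → ℕ, ∀ a ∈ A, inv (r a) = a := by
      classical
      refine ⟨fun b => if h : ∃ a ∈ A, r a = b then h.choose else 0, ?_⟩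
      intro a ha
      have hex : ∃ a' ∈ A, r a' = r a := ⟨a, ha, rfl⟩
      simp only [dif_pos hex]
      obtain ⟨h1, h2⟩ := hex.choose_spec
      exact hrinj (Finset.mem_coe.2 h1) (Finset.mem_coe.2 ha) h2
    set g : ℕ → ℕ := fun x => if x < j then σ x else inv (f (x - j)) with hgdef
    have hchar : ∀ x ∈ (↑((addApex j F).sup id) : Set ℕ),
        x < j ∨ (j ≤ x ∧ (x - j) ∈ (↑(F.sup id) : Set ℕ)) := by
      intro x hx
      have hx' := Finset.mem_coe.1 hx
      rw [Finset.mem_sup] at hx'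
      obtain ⟨e', he', hxe'⟩ := hx'
      obtain ⟨e, he, rfl⟩ := Finset.mem_image.1 he'
      simp only [id_eq] at hxe'
      rcases Finset.mem_union.1 hxe' with h | h
      · obtain ⟨v, hv, rfl⟩ := Finset.mem_image.1 h
        refine Or.inr ⟨by omega, ?_⟩
        have : v ∈ F.sup id := by
          rw [Finset.mem_sup]; exact ⟨e, he, by simpa using hv⟩
        simpa using Finset.mem_coe.2 this
      · exact Or.inl (Finset.mem_range.1 h)
    have hfval : ∀ v ∈ (↑(F.sup id) : Set ℕ), ∃ w ∈ A, r w = f v ∧ w ∉ S := by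
      intro v hv
      have hv' := Finset.mem_coe.1 hv
      rw [Finset.mem_sup] at hv'
      obtain ⟨e, he, hve⟩ := hv'
      simp only [id_eq] at hve
      have himg := hfmap e he
      rw [hGdef] at himg
      obtain ⟨E, hE, hEeq⟩ := Finset.mem_image.1 himg
      have : f v ∈ Φ E := hEeq ▸ Finset.mem_image.2 ⟨v, hve, rfl⟩
      obtain ⟨w, hw, hwr⟩ := Finset.mem_image.1 this
      exact ⟨w, hES_A E hE hw, hwr, (Finset.mem_sdiff.1 hw).2⟩
    refine ⟨g, ?_, ?_⟩
    · intro x hx y hy hxy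
      rcases hchar x hx with hx1 | ⟨hx1, hx2⟩ <;> rcases hchar y hy with hy1 | ⟨hy1, hy2⟩
      · rw [hgdef] at hxy
        simp only [hx1, hy1, if_pos] at hxy
        exact hσinj x hx1 y hy1 hxy
      · exfalso
        obtain ⟨w, hwA, hwr, hwS⟩ := hfval (y - j) hy2
        rw [hgdef] at hxy
        simp only [hx1, if_pos, if_neg (by omega : ¬ y < j)] at hxy
        rw [← hwr, hinvspec w hwA] at hxy
        exact hwS (hxy ▸ hσmem x hx1)
      · exfalso
        obtain ⟨w, hwA, hwr, hwS⟩ := hfval (x - j) hx2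
        rw [hgdef] at hxy
        simp only [hy1, if_pos, if_neg (by omega : ¬ x < j)] at hxy
        rw [← hwr, hinvspec w hwA] at hxy
        exact hwS (hxy ▸ hσmem y hy1)
      · obtain ⟨w, hwA, hwr, _⟩ := hfval (x - j) hx2
        obtain ⟨w', hwA', hwr', _⟩ := hfval (y - j) hy2
        rw [hgdef] at hxy
        simp only [if_neg (by omega : ¬ x < j), if_neg (by omega : ¬ y < j)] at hxy
        rw [← hwr, hinvspec w hwA, ← hwr', hinvspec w' hwA'] at hxy
        subst hxy
        have : f (x - j) = f (y - j) := by rw [← hwr, ← hwr']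
        have := hfinj hx2 hy2 this
        omega
    · intro e' he'
      obtain ⟨e, he, rfl⟩ := Finset.mem_image.1 he'
      have h2 : (Finset.range j).image g = (Finset.range j).image σ :=
        Finset.image_congr (fun x hx => by
          rw [hgdef]
          simp only [if_pos (Finset.mem_range.1 (Finset.mem_coe.1 hx))])
      have hσS : (Finset.range j).image σ = S := by
        apply Finset.eq_of_subset_of_card_le
        · intro b hb
          obtain ⟨i, hi, rfl⟩ := Finset.mem_image.1 hb
          exact hσmem i (Finset.mem_range.1 hi)
        · rw [hScard, Finset.card_image_of_injOn (fun a ha b hb h =>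
            hσinj a (Finset.mem_range.1 (Finset.mem_coe.1 ha))
              b (Finset.mem_range.1 (Finset.mem_coe.1 hb)) h),
            Finset.card_range]
      have h3 : (e.image (· + j)).image g = e.image (fun v => inv (f v)) := by
        rw [Finset.image_image]
        apply Finset.image_congr
        intro v _
        show g (v + j) = inv (f v)
        rw [hgdef]
        simp only [if_neg (by omega : ¬ v + j < j)]
        congr 2
        omega
      have himg := hfmap e he
      rw [hGdef] at himg
      obtain ⟨E, hE, hEeq⟩ := Finset.mem_image.1 himg
      have h4 : e.image (fun v => inv (f v)) = E \ S := by
        have h5 : e.image (fun v => inv (f v)) = (e.image f).image inv :=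
          (Finset.image_image).symm
        rw [h5, ← hEeq, hΦdef, Finset.image_image]
        exact (Finset.image_congr (g := id) (fun x hx =>
          hinvspec x (hES_A E hE (Finset.mem_coe.1 hx)))).trans Finset.image_id
      rw [Finset.image_union, h2, hσS, h3, h4]
      have h6 : E \ S ∪ S = E := by
        rw [Finset.union_comm]
        exact Finset.union_sdiff_of_subset (hSsub E hE)
      rw [h6]
      exact hE

/-- Let `Fam` be a family of `l`-uniform hypergraphs each containing two
disjoint edges, and let `k > l`.  Let `Fam'` consist of `(F, x_1, ..., x_{k-l})` for
each `F ∈ Fam` together with all `k`-uniform hypergraphs with at most `l+2` edges whose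
edges do not all share a common `(k-l)`-set.  Then `ex(n+k-l, Fam') = ex(n, Fam)` for
all `n`. -/
theorem ex_of_apex_family (k l : ℕ) (hlk : l < k)
    (Fam : Set (Finset (Finset ℕ)))
    (huniform : ∀ F ∈ Fam, ∀ e ∈ F, e.card = l)
    (hdisj : ∀ F ∈ Fam, ∃ e₁ ∈ F, ∃ e₂ ∈ F, e₁ ≠ e₂ ∧ Disjoint e₁ e₂) :
    ∀ n, exNum (n + (k - l)) k
        ({G | ∃ F ∈ Fam, G = addApex (k - l) F} ∪
         {G | (∀ e ∈ G, e.card = k) ∧ G.card ≤ l + 2 ∧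
            ¬ ∃ S : Finset ℕ, S.card = k - l ∧ ∀ e ∈ G, S ⊆ e})
      = exNum n l Fam := by
  intro n
  exact le_antisymm (upper_bound k l n hlk Fam hdisj)
    (lower_bound k l n hlk Fam huniform hdisj)
end

section
/- Let G be a k-uniform hypergraph in which every set of l+2 edges shares a common set of k-l vertices (i.e., every l+2 edges have at least k-l common vertices). Then all edges of G share a common set of k-l vertices. -/
open Finset

/-- Helly-type property: Let `G` be a `k`-uniform hypergraph
(`1 ≤ l < k`) in which every collection of at most `l+2` edges has at least `k-l`
common vertices.  Then all the edges of `G` share a common set of `k-l` vertices. -/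
theorem common_core_of_local_cores (k l : ℕ) (hl : 1 ≤ l) (hlk : l < k)
    (G : Finset (Finset ℕ)) (huniform : ∀ e ∈ G, e.card = k)
    (hlocal : ∀ E' ⊆ G, E'.card ≤ l + 2 →
      ∃ S : Finset ℕ, S.card = k - l ∧ ∀ e ∈ E', S ⊆ e) :
    ∃ S : Finset ℕ, S.card = k - l ∧ ∀ e ∈ G, S ⊆ e := by
  -- Key inductive claim: either we already have a large common core, or there is
  -- a small subfamily F with a small intersection I.
  have key : ∀ n : ℕ, n ≤ l + 1 →
      (∃ T : Finset ℕ, k - l ≤ T.card ∧ ∀ e ∈ G, T ⊆ e) ∨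
      (∃ F : Finset (Finset ℕ), ∃ I : Finset ℕ, F ⊆ G ∧ F.card ≤ n + 1 ∧
        I.card ≤ k - n ∧ (∀ e ∈ F, I ⊆ e) ∧
        (∀ J : Finset ℕ, (∀ e ∈ F, J ⊆ e) → J ⊆ I)) := by
    intro n
    induction n with
    | zero =>
      intro _
      rcases G.eq_empty_or_nonempty with rfl | ⟨e₀, he₀⟩
      · left
        obtain ⟨S, hS, _⟩ := hlocal ∅ (by simp) (by simp)
        exact ⟨S, hS.ge, by simp⟩
      · right
        refine ⟨{e₀}, e₀, by simpa using he₀, by simp, by simp [huniform e₀ he₀],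
          by simp, fun J hJ => hJ e₀ (by simp)⟩
    | succ n ih =>
      intro hn
      rcases ih (by omega) with h | ⟨F, I, hFG, hFcard, hIcard, hIsub, hImax⟩
      · exact Or.inl h
      by_cases hall : ∀ e ∈ G, I ⊆ e
      · left
        obtain ⟨S, hScard, hSsub⟩ := hlocal F hFG (by omega)
        exact ⟨S, hScard.ge, fun e he => (hImax S hSsub).trans (hall e he)⟩
      · push_neg at hall
        obtain ⟨e, heG, hne⟩ := hall
        right
        refine ⟨insert e F, e ∩ I, insert_subset heG hFG,
          (card_insert_le _ _).trans (by omega), ?_, ?_, ?_⟩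
        · have hss : e ∩ I ⊂ I := by
            refine Finset.ssubset_iff_subset_ne.mpr ⟨inter_subset_right, ?_⟩
            intro h
            exact hne (by rw [← h]; exact inter_subset_left)
          have := card_lt_card hss
          omega
        · intro f hf
          rcases mem_insert.mp hf with rfl | hf
          · exact inter_subset_left
          · exact inter_subset_right.trans (hIsub f hf)
        · intro J hJ
          exact subset_inter (hJ e (mem_insert_self _ _))
            (hImax J fun f hf => hJ f (mem_insert_of_mem hf))
  rcases key (l + 1) le_rfl with ⟨T, hTcard, hTsub⟩ | ⟨F, I, hFG, hFcard, hIcard, _, hImax⟩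
  · obtain ⟨S, hST, hScard⟩ := Finset.exists_subset_card_eq hTcard
    exact ⟨S, hScard, fun e he => hST.trans (hTsub e he)⟩
  · exfalso
    obtain ⟨S, hScard, hSsub⟩ := hlocal F hFG (by omega)
    have := card_le_card (hImax S hSsub)
    omega
end
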